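/- arXiv:2509.11349 — 5 statements merged into one kernel-verified Lean document; each statement's English description precedes it below -/
import Mathlib

section
/- For any n ≥ 1, the map sending a nonassociative noncommutative monomial m (an element of the free magma on Fin n) of degree d' to the list of pairs ((σ_m(1), l^m_1), (σ_m(2), l^m_2), …, (σ_m(d'), l^m_{d'})) is injective: if m ≠ m' are two elements of the free magma on Fin n, then their associated lists of (leaf label, leaf level) pairs are distinct. -/
noncomputable section

open scoped BigOperators

namespace NAPIT

/-- The list of (leaf label, leaf level) pairs of a nonassociative monomial (element of the
free magma), in left-to-right order, where the root of the monomial is at level `s`. -/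
def leafData {n : ℕ} : FreeMagma (Fin n) → ℕ → List (Fin n × ℕ)
  | FreeMagma.of i, s => [(i, s)]
  | FreeMagma.mul x y, s => leafData x (s + 1) ++ leafData y (s + 1)

/-- The degree (number of leaves) of a nonassociative monomial. -/
def degM {n : ℕ} : FreeMagma (Fin n) → ℕ
  | FreeMagma.of _ => 1
  | FreeMagma.mul x y => degM x + degM y

/-- The depth of a nonassociative monomial (root at level 1; the depth is the maximal level
of a leaf). -/
def depthM {n : ℕ} : FreeMagma (Fin n) → ℕ
  | FreeMagma.of _ => 1
  | FreeMagma.mul x y => max (depthM x) (depthM y) + 1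

/-- Evaluation of a nonassociative monomial at `b : Fin n → A`, using `mul` as the product on
`A`; this is the unique magma homomorphism `FreeMagma (Fin n) → (A, mul)` with `x_i ↦ b i`. -/
def evalWith {n : ℕ} {A : Type*} (mul : A → A → A) (b : Fin n → A) : FreeMagma (Fin n) → A
  | FreeMagma.of i => b i
  | FreeMagma.mul x y => mul (evalWith mul b x) (evalWith mul b y)

/-- The multiset of all variants `m_ε` of a monomial `m`, where `ε` ranges over all choices of
a Boolean for each internal node of `m`, and `m_ε` is obtained from `m` by swapping the two
children at exactly those internal nodes where `ε` is true (counted with multiplicity). -/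
def variants {n : ℕ} : FreeMagma (Fin n) → Multiset (FreeMagma (Fin n))
  | FreeMagma.of i => {FreeMagma.of i}
  | FreeMagma.mul x y =>
      (variants x).bind fun x' => (variants y).bind fun y' =>
        {FreeMagma.mul x' y', FreeMagma.mul y' x'}

/-- The underlying module of the algebra `A'_d(R)`: arrays `x[i,j,k]` with
`i, j ∈ Fin (d+1)`, `k ∈ Fin d` (zero-based; the paper's indices are shifted by one). -/
def Arr (d : ℕ) (R : Type*) : Type _ := Fin (d + 1) → Fin (d + 1) → Fin d → R

namespace Arr

variable {d : ℕ} {R : Type*}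

instance instAddCommGroup [AddCommGroup R] : AddCommGroup (Arr d R) :=
  inferInstanceAs (AddCommGroup (Fin (d + 1) → Fin (d + 1) → Fin d → R))

instance instModule {S : Type*} [Semiring S] [AddCommGroup R] [Module S R] :
    Module S (Arr d R) :=
  inferInstanceAs (Module S (Fin (d + 1) → Fin (d + 1) → Fin d → R))

/-- The bilinear product `∘` of `A'_d(R)`:
`(x ∘ y)[i,j,k] = ∑_{l} x[i,l,k+1] * y[l,j,k+1]` if `k+1` is a legal third index, else `0`. -/
def aprod [CommRing R] (x y : Arr d R) : Arr d R := fun i j k =>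
  if h : (k : ℕ) + 1 < d then
    ∑ l : Fin (d + 1), x i l ⟨(k : ℕ) + 1, h⟩ * y l j ⟨(k : ℕ) + 1, h⟩
  else 0

instance instMul [CommRing R] : Mul (Arr d R) := ⟨aprod⟩

end Arr

/-- The algebra `C'_d(R)`: same underlying module as `A'_d(R)`, with the anticommutator
product `a ⊙ b = a ∘ b + b ∘ a`. -/
def CArr (d : ℕ) (R : Type*) : Type _ := Arr d R

namespace CArr

variable {d : ℕ} {R : Type*}

/-- The identity map `A'_d(R) → C'_d(R)` of underlying modules. -/
def ofArr (x : Arr d R) : CArr d R := x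

/-- The identity map `C'_d(R) → A'_d(R)` of underlying modules. -/
def toArr (x : CArr d R) : Arr d R := x

instance instAddCommGroup [AddCommGroup R] : AddCommGroup (CArr d R) :=
  inferInstanceAs (AddCommGroup (Arr d R))

instance instModule {S : Type*} [Semiring S] [AddCommGroup R] [Module S R] :
    Module S (CArr d R) :=
  inferInstanceAs (Module S (Arr d R))

instance instMul [CommRing R] : Mul (CArr d R) :=
  ⟨fun a b => ofArr (toArr a * toArr b + toArr b * toArr a)⟩

end CArr

/-- The element `Z_i ∈ A'_d(R)`, `R = MvPolynomial (Fin n × Fin d × Fin d) F`, whose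
`(j, j+1, k)` entry is the indeterminate `z_{i,j,k}` and whose other entries vanish. -/
def Z (F : Type*) [CommRing F] (n d : ℕ) (i : Fin n) :
    Arr d (MvPolynomial (Fin n × Fin d × Fin d) F) := fun j j' k =>
  if h : (j : ℕ) < d ∧ (j' : ℕ) = (j : ℕ) + 1 then
    MvPolynomial.X (i, ⟨(j : ℕ), h.1⟩, k)
  else 0

/-- The element `Z_i` regarded as an element of `C'_d(R)`. -/
def ZC (F : Type*) [CommRing F] (n d : ℕ) (i : Fin n) :
    CArr d (MvPolynomial (Fin n × Fin d × Fin d) F) := CArr.ofArr (Z F n d i)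

/-- The monomial `∏_{t=1}^{d'} z_{σ_m(t), (t-1) + k1, (l^m_t - 1) + k2}` associated to a
nonassociative monomial `m` of degree `d'` and offsets `k1, k2` (all indices zero-based; the
paper's 1-based offsets are `k1 + 1`, `k2 + 1`).  Indices which would fall out of range are
discarded (this never happens in the intended range of parameters). -/
def monProd (F : Type*) [CommRing F] {n : ℕ} (d : ℕ) (k1 k2 : ℕ) (m : FreeMagma (Fin n)) :
    MvPolynomial (Fin n × Fin d × Fin d) F :=
  (((leafData m 1).zipIdx.map Prod.swap).map fun p =>
    if h : p.1 + k1 < d ∧ p.2.2 - 1 + k2 < d then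
      MvPolynomial.X (p.2.1, ⟨p.1 + k1, h.1⟩, ⟨p.2.2 - 1 + k2, h.2⟩)
    else 0).prod

/-- `ψ(m) = ∑_ε ∏_{t=1}^{d'} z_{σ_{m_ε}(t), t, l^{m_ε}_t}` (1-based), the sum running over all
choices `ε` of a Boolean for each internal node of `m`. -/
def psi (F : Type*) [CommRing F] {n : ℕ} (d : ℕ) (m : FreeMagma (Fin n)) :
    MvPolynomial (Fin n × Fin d × Fin d) F :=
  ((variants m).map fun m' => monProd F d 0 0 m').sum

/-- The coefficient function of an element of the free nonunital nonassociative algebra. -/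
def coeffOf {F : Type*} [Semiring F] {n : ℕ}
    (f : FreeNonUnitalNonAssocAlgebra F (Fin n)) : FreeMagma (Fin n) →₀ F := f.coeff

/-- Evaluation of an element of the free nonunital nonassociative algebra on `x_1, …, x_n` at
the tuple `b`, with `mul` as the product of the target: the linear extension of
`m ↦ evalWith mul b m`, i.e. the unique nonunital `F`-algebra homomorphism sending
`x_i ↦ b i` into `(A, mul)`. -/
def evalNAWith {F : Type*} [Semiring F] {n : ℕ} {A : Type*}
    [AddCommMonoid A] [Module F A] (mul : A → A → A) (b : Fin n → A)
    (f : FreeNonUnitalNonAssocAlgebra F (Fin n)) : A :=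
  Finsupp.sum (coeffOf f) fun m c => c • evalWith mul b m

/-- Evaluation of an element of the free nonunital nonassociative algebra at a tuple `b` of
elements of a (not necessarily unital/associative) algebra `A`: the unique nonunital
`F`-algebra homomorphism sending `x_i ↦ b i`. -/
def evalNA {F : Type*} [Semiring F] {n : ℕ} {A : Type*}
    [AddCommMonoid A] [Mul A] [Module F A] (b : Fin n → A)
    (f : FreeNonUnitalNonAssocAlgebra F (Fin n)) : A :=
  evalNAWith (· * ·) b f

/-- Evaluation of an element of the unitization of the free nonunital nonassociative algebra
at a tuple `b` of elements of the unitization of `A`: the unique unital `F`-algebra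
homomorphism sending `x_i ↦ b i` (and the adjoined unit to the unit). -/
def evalUnit {F : Type*} [CommSemiring F] {n : ℕ} {A : Type*}
    [AddCommMonoid A] [Mul A] [Module F A] (b : Fin n → Unitization F A)
    (f : Unitization F (FreeNonUnitalNonAssocAlgebra F (Fin n))) : Unitization F A :=
  Unitization.inl f.fst + evalNA b f.snd

/-- The commutativity congruence on the free magma: the smallest equivalence relation with
`m₁ * m₂ ≈ m₂ * m₁` and compatible with the product. -/
inductive CommEq {n : ℕ} : FreeMagma (Fin n) → FreeMagma (Fin n) → Prop
  | refl (m : FreeMagma (Fin n)) : CommEq m m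
  | symm {a b : FreeMagma (Fin n)} : CommEq a b → CommEq b a
  | trans {a b c : FreeMagma (Fin n)} : CommEq a b → CommEq b c → CommEq a c
  | comm (a b : FreeMagma (Fin n)) : CommEq (a * b) (b * a)
  | mul_congr {a a' b b' : FreeMagma (Fin n)} :
      CommEq a a' → CommEq b b' → CommEq (a * b) (a' * b')

/-- The basis monomial `m` of the free nonunital nonassociative algebra. -/
def single1 (F : Type*) [Semiring F] {n : ℕ} (m : FreeMagma (Fin n)) :
    FreeNonUnitalNonAssocAlgebra F (Fin n) :=
  MonoidAlgebra.ofCoeff (Finsupp.single m 1 : FreeMagma (Fin n) →₀ F)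

/-- `I_comm`: the `F`-linear span of `{m − m' : m ≈ m'}` inside the free nonunital
nonassociative algebra. -/
def Icomm (F : Type*) [Field F] (n : ℕ) :
    Submodule F (FreeNonUnitalNonAssocAlgebra F (Fin n)) :=
  Submodule.span F
    {x | ∃ m m' : FreeMagma (Fin n), CommEq m m' ∧ x = single1 F m - single1 F m'}

/- The leaf-data lists form a prefix code: a variable's single leaf sits at the root level, while
every leaf of a product lies strictly deeper, so the first entry tells a variable from a product;
a product's list is the concatenation of its factors' lists, which induction then peels off. -/

section

variable {n : ℕ}

theorem leafData_mul (x y : FreeMagma (Fin n)) (s : ℕ) :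
    leafData (x * y) s = leafData x (s + 1) ++ leafData y (s + 1) := rfl

theorem exists_leafData_eq_cons (m : FreeMagma (Fin n)) (s : ℕ) :
    ∃ p rest, leafData m s = p :: rest ∧ s ≤ p.2 := by
  induction m generalizing s with
  | ih1 i => exact ⟨(i, s), [], rfl, le_rfl⟩
  | ih2 x y ihx _ =>
    obtain ⟨p, rest, hx, hp⟩ := ihx (s + 1)
    exact ⟨p, rest ++ leafData y (s + 1), by rw [leafData_mul, hx, List.cons_append], by omega⟩

theorem leafData_mul_append_ne_cons (x y : FreeMagma (Fin n)) (s : ℕ) (i : Fin n)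
    (l l' : List (Fin n × ℕ)) : leafData (x * y) s ++ l ≠ (i, s) :: l' := by
  obtain ⟨p, rest, hx, hp⟩ := exists_leafData_eq_cons x (s + 1)
  intro h
  rw [leafData_mul, hx, List.append_assoc, List.cons_append] at h
  obtain rfl := (List.cons.inj h).1
  omega

theorem leafData_append_inj {x x' : FreeMagma (Fin n)} {s : ℕ} {l l' : List (Fin n × ℕ)}
    (h : leafData x s ++ l = leafData x' s ++ l') : x = x' ∧ l = l' := by
  induction x generalizing x' s l l' with
  | ih1 i =>
    cases x' with
    | of j =>
      obtain ⟨hij, hl⟩ := List.cons.inj h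
      exact ⟨congrArg FreeMagma.of (Prod.ext_iff.1 hij).1, hl⟩
    | mul a b => exact absurd h.symm (leafData_mul_append_ne_cons a b s i l' l)
  | ih2 a b iha ihb =>
    cases x' with
    | of j => exact absurd h (leafData_mul_append_ne_cons a b s j l l')
    | mul a' b' =>
      simp only [leafData, List.append_assoc] at h
      obtain ⟨rfl, hrest⟩ := iha h
      obtain ⟨rfl, rfl⟩ := ihb hrest
      exact ⟨rfl, rfl⟩

end

theorem leafData_injective_general (n : ℕ) :
    Function.Injective (fun m : FreeMagma (Fin n) => leafData m 1) := fun _ _ h =>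
  (leafData_append_inj (l := []) (l' := []) (by simpa using h)).1

/-- For any `n ≥ 1`, the map sending a nonassociative noncommutative
monomial `m` (an element of the free magma on `Fin n`) to the list of its
(leaf label, leaf level) pairs `((σ_m(1), l^m_1), …, (σ_m(d'), l^m_{d'}))`, in left-to-right
order with the root at level `1`, is injective. -/
theorem leafData_injective (n : ℕ) (hn : 1 ≤ n) :
    Function.Injective (fun m : FreeMagma (Fin n) => leafData m 1) :=
  leafData_injective_general n

end NAPIT
end
end

section
/- Let F be a field, d, n ≥ 1, and let S ⊆ F be a finite set with |S| > d. Set N := d(d+1)² + 1 and identify A_d with F^N as an F-vector space (the d(d+1)² entries of the A'_d component together with the scalar coordinate). Let f be a nonzero element of the unitization of F_{Ā,C̄}[X] whose F_{Ā,C̄}[X]-component has degree ≤ d. Then the number of tuples (b_1,…,b_n) with every b_i ∈ A_d having all N coordinates in S for which the evaluation f(b_1,…,b_n) = 0 is at most d · |S|^{nN − 1}; equivalently, if each of the nN coordinates is chosen uniformly and independently from S, then Pr[f(b_1,…,b_n) = 0] ≤ d/|S|. -/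
/-!
Evaluate `f` at the generic tuple, whose `nN` coordinates are independent variables. Each
coordinate of the result is a polynomial of total degree at most `d` in these variables, and
evaluating it at a point gives that coordinate of `f` at the corresponding tuple. It therefore
suffices to find a nonzero coordinate polynomial and to apply the Schwartz–Zippel lemma to it.
If `f.fst ≠ 0`, the scalar coordinate has constant term `f.fst`. Otherwise pick a monomial of
`f` of some degree `D`; specializing the generic tuple to the paper's `Z_i` turns the entry
`(0, D, 0)` (zero-based) into `∑ c_m ∏ z_{label, position, level}`, the product running over
the leaves of `m` and the sum over the monomials `m` of `f` of degree `D`. These products are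
distinct monomials, since a tree is determined by the levels of its leaves read from left to
right.
-/

noncomputable section

open scoped BigOperators

namespace NAPIT

open MvPolynomial

lemma prod_map_X_eq_monomial {σ R : Type*} [CommSemiring R] [DecidableEq σ] (L : List σ) :
    (L.map X).prod = monomial (Multiset.toFinsupp (L : Multiset σ)) (1 : R) := by
  induction L with
  | nil => simp
  | cons a L ih =>
    rw [List.map_cons, List.prod_cons, ih, ← Multiset.cons_coe, ← Multiset.singleton_add,
      Multiset.toFinsupp_add, Multiset.toFinsupp_singleton, monomial_single_add, pow_one]

lemma sum_fin_ite_val_eq {M : Type*} [AddCommMonoid M] {N : ℕ} (c : ℕ) (g : Fin N → M) :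
    ∑ l : Fin N, (if (l : ℕ) = c then g l else 0) = if h : c < N then g ⟨c, h⟩ else 0 := by
  split_ifs with h
  · rw [Finset.sum_eq_single ⟨c, h⟩ (fun l _ hl => if_neg fun hc => hl (Fin.ext hc))
      (by simp)]
    simp
  · exact Finset.sum_eq_zero fun l _ => if_neg fun hc => h (by rw [← hc]; exact l.isLt)

open Finset in
lemma card_zeros_mul_card_le {σ R : Type*} [Fintype σ] [DecidableEq σ] [CommRing R] [IsDomain R]
    [DecidableEq R]
    {p : MvPolynomial σ R} (hp : p ≠ 0) (S : Finset R) :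
    #{x ∈ Fintype.piFinset fun _ : σ => S | eval x p = 0} * #S ≤
      p.totalDegree * #S ^ Fintype.card σ := by
  set e := Fintype.equivFin σ
  have hp' : rename e p ≠ 0 := (rename_injective _ e.injective).ne_iff' (map_zero _) |>.2 hp
  have hcard : #{x ∈ Fintype.piFinset fun _ : σ => S | eval x p = 0} =
      #{x ∈ Fintype.piFinset fun _ => S | eval x (rename e p) = 0} :=
    card_equiv (e.arrowCongr (Equiv.refl R)) fun x => by
      simp only [mem_filter, Fintype.mem_piFinset, eval_rename]
      exact and_congr e.symm.forall_congr_right.symm (by simp [Function.comp_def])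
  rcases S.eq_empty_or_nonempty with rfl | hS
  · simp
  have key := schwartz_zippel_totalDegree hp' S
  rw [div_le_div_iff₀ (by positivity) (by simpa using hS.card_pos)] at key
  have hdeg : ((rename e p).totalDegree : ℚ≥0) ≤ p.totalDegree := by
    exact_mod_cast totalDegree_rename_le _ _
  rw [hcard]
  exact_mod_cast key.trans (mul_le_mul_of_nonneg_right hdeg (by positivity))

lemma le_mul_pow_sub_one_of_mul_le {w d s N : ℕ} (h : w * s ≤ d * s ^ N) (hds : d < s) :
    w ≤ d * s ^ (N - 1) := by
  rcases N with _ | N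
  · rcases w with _ | w
    · exact Nat.zero_le _
    · nlinarith
  · rw [pow_succ, ← mul_assoc] at h
    exact Nat.le_of_mul_le_mul_right h (by omega)

section FreeMagma

variable {n : ℕ}

@[simp] lemma degM_of (i : Fin n) : degM (FreeMagma.of i) = 1 := rfl

@[simp] lemma degM_mul (x y : FreeMagma (Fin n)) : degM (x * y) = degM x + degM y := rfl

@[simp] lemma depthM_of (i : Fin n) : depthM (FreeMagma.of i) = 1 := rfl

@[simp] lemma depthM_mul (x y : FreeMagma (Fin n)) :
    depthM (x * y) = max (depthM x) (depthM y) + 1 := rfl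

@[simp] lemma evalWith_of {A : Type*} (mul : A → A → A) (b : Fin n → A) (i : Fin n) :
    evalWith mul b (FreeMagma.of i) = b i := rfl

@[simp] lemma evalWith_mul {A : Type*} (mul : A → A → A) (b : Fin n → A)
    (x y : FreeMagma (Fin n)) :
    evalWith mul b (x * y) = mul (evalWith mul b x) (evalWith mul b y) := rfl

lemma one_le_depthM (m : FreeMagma (Fin n)) : 1 ≤ depthM m := by
  cases m <;> simp [depthM]

lemma depthM_le_degM (m : FreeMagma (Fin n)) : depthM m ≤ degM m := by
  induction m using FreeMagma.recOnMul with
  | ih1 i => simp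
  | ih2 x y ihx ihy =>
    have := one_le_depthM x
    have := one_le_depthM y
    simp only [depthM_mul, degM_mul]
    omega

/-- The leaves of `m` from left to right, as triples (label, position, level): positions are
counted from `a` and the root of `m` sits at level `s`. -/
def leaves (a s : ℕ) : FreeMagma (Fin n) → List (Fin n × ℕ × ℕ)
  | .of i => [(i, a, s)]
  | .mul x y => leaves a (s + 1) x ++ leaves (a + degM x) (s + 1) y

@[simp] lemma leaves_of (a s : ℕ) (i : Fin n) : leaves a s (FreeMagma.of i) = [(i, a, s)] := rfl

@[simp] lemma leaves_mul (a s : ℕ) (x y : FreeMagma (Fin n)) :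
    leaves a s (x * y) = leaves a (s + 1) x ++ leaves (a + degM x) (s + 1) y := rfl

lemma leaves_ne_nil (a s : ℕ) (m : FreeMagma (Fin n)) : leaves a s m ≠ [] := by
  induction m using FreeMagma.recOnMul generalizing a s with
  | ih1 i => simp
  | ih2 x y ihx _ => simp [ihx]

lemma bounds_of_mem_leaves {a s : ℕ} {m : FreeMagma (Fin n)} {p : Fin n × ℕ × ℕ}
    (hp : p ∈ leaves a s m) : a ≤ p.2.1 ∧ p.2.1 < a + degM m ∧ s ≤ p.2.2 := by
  induction m using FreeMagma.recOnMul generalizing a s with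
  | ih1 i => simp_all
  | ih2 x y ihx ihy =>
    rcases List.mem_append.1 hp with hp | hp
    · have := ihx hp; simp only [degM_mul]; omega
    · have := ihy hp; simp only [degM_mul]; omega

lemma leaves_pairwise_lt (a s : ℕ) (m : FreeMagma (Fin n)) :
    (leaves a s m).Pairwise fun p q => p.2.1 < q.2.1 := by
  induction m using FreeMagma.recOnMul generalizing a s with
  | ih1 i => simp
  | ih2 x y ihx ihy =>
    refine List.pairwise_append.2 ⟨ihx _ _, ihy _ _, fun p hp q hq => ?_⟩
    exact (bounds_of_mem_leaves hp).2.1.trans_le (bounds_of_mem_leaves hq).1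

/-- The first leaf of a product lies strictly below the root. -/
lemma leaves_mul_append_ne_cons (a s : ℕ) (x y : FreeMagma (Fin n)) (i : Fin n)
    (L L' : List (Fin n × ℕ × ℕ)) : leaves a s (x * y) ++ L ≠ (i, a, s) :: L' := by
  obtain ⟨p, tl, hx⟩ := List.exists_cons_of_ne_nil (leaves_ne_nil a (s + 1) x)
  intro h
  simp only [leaves_mul, hx, List.cons_append, List.cons.injEq] at h
  have := (bounds_of_mem_leaves (hx ▸ List.mem_cons_self : p ∈ leaves a (s + 1) x)).2.2
  simp [h.1] at this

/-- The leaf sequence is a prefix code: a tree is read off from any list its leaves begin. -/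
lemma leaves_append_inj {a s : ℕ} {m m' : FreeMagma (Fin n)} {L L' : List (Fin n × ℕ × ℕ)}
    (h : leaves a s m ++ L = leaves a s m' ++ L') : m = m' ∧ L = L' := by
  induction m using FreeMagma.recOnMul generalizing a s m' L L' with
  | ih1 i =>
    cases m' with
    | of i' => simp_all
    | mul x' y' => exact absurd h.symm (leaves_mul_append_ne_cons a s x' y' i L' L)
  | ih2 x y ihx ihy =>
    cases m' with
    | of i' => exact absurd h (leaves_mul_append_ne_cons a s x y i' L L')
    | mul x' y' =>
      have h' : leaves a s (x * y) ++ L = leaves a s (x' * y') ++ L' := h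
      simp only [leaves_mul, List.append_assoc] at h'
      obtain ⟨rfl, h''⟩ := ihx h'
      obtain ⟨rfl, rfl⟩ := ihy h''
      exact ⟨rfl, rfl⟩

lemma eq_of_leaves_perm {a s : ℕ} {m m' : FreeMagma (Fin n)}
    (h : (leaves a s m).Perm (leaves a s m')) : m = m' := by
  have : Std.Antisymm fun p q : Fin n × ℕ × ℕ => p.2.1 < q.2.1 :=
    ⟨fun _ _ h h' => absurd (h.trans h') (lt_irrefl _)⟩
  have hL := h.eq_of_pairwise' (leaves_pairwise_lt a s m) (leaves_pairwise_lt a s m')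
  exact (leaves_append_inj (L := []) (L' := []) (by rw [hL])).1

end FreeMagma

namespace Arr

variable {d : ℕ} {R : Type*}

@[simp] lemma add_apply [AddCommGroup R] (x y : Arr d R) (a b : Fin (d + 1)) (k : Fin d) :
    (x + y) a b k = x a b k + y a b k := rfl

@[simp] lemma smul_apply [AddCommGroup R] {S : Type*} [Semiring S] [Module S R] (c : S)
    (x : Arr d R) (a b : Fin (d + 1)) (k : Fin d) : (c • x) a b k = c • x a b k := rfl

lemma mul_apply [CommRing R] (x y : Arr d R) (a b : Fin (d + 1)) (k : Fin d) :
    (x * y) a b k = if h : (k : ℕ) + 1 < d then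
      ∑ l : Fin (d + 1), x a l ⟨k + 1, h⟩ * y l b ⟨k + 1, h⟩ else 0 := rfl

end Arr

section Shift

variable (F : Type*) [CommRing F] {n d : ℕ}

/-- The paper's `Z_i`, with the variable `z_{i,j,k}` indexed by `Fin n × ℕ × ℕ`. -/
def shiftArr (n d : ℕ) (i : Fin n) : Arr d (MvPolynomial (Fin n × ℕ × ℕ) F) :=
  fun a b k => if (b : ℕ) = a + 1 then X (i, a, k) else 0

def leafMonomial (a s : ℕ) (m : FreeMagma (Fin n)) : MvPolynomial (Fin n × ℕ × ℕ) F :=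
  ((leaves a s m).map X).prod

lemma leafMonomial_mul (a s : ℕ) (x y : FreeMagma (Fin n)) :
    leafMonomial F a s (x * y) =
      leafMonomial F a (s + 1) x * leafMonomial F (a + degM x) (s + 1) y := by
  simp [leafMonomial]

/-- The product of `A'_d` reads its factors one level deeper, which is why trees deeper than
`d - k` vanish. -/
lemma evalWith_shiftArr_apply (m : FreeMagma (Fin n)) (a b : Fin (d + 1)) (k : Fin d) :
    evalWith (· * ·) (shiftArr F n d) m a b k =
      if (b : ℕ) = a + degM m ∧ k + depthM m ≤ d then leafMonomial F a k m else 0 := by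
  induction m using FreeMagma.recOnMul generalizing a b k with
  | ih1 i =>
    have := k.isLt
    simp [shiftArr, leafMonomial]
  | ih2 x y ihx ihy =>
    have := one_le_depthM x
    have := one_le_depthM y
    rw [evalWith_mul]
    by_cases hk : (k : ℕ) + 1 < d
    · simp only [Arr.mul_apply, dif_pos hk, ihx, ihy, ite_and, ite_mul, zero_mul,
        sum_fin_ite_val_eq]
      split_ifs <;> simp_all [leafMonomial_mul] <;> omega
    · rw [Arr.mul_apply, dif_neg hk, if_neg (by simp only [depthM_mul]; omega)]

end Shift

section Coordinates

variable {F R R' : Type*} [CommRing F] [CommRing R] [CommRing R'] [Algebra F R] [Algebra F R']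
  {n d : ℕ}

abbrev Coord (d : ℕ) := Option (Fin (d + 1) × Fin (d + 1) × Fin d)

def coord (u : Coord d) : Unitization R (Arr d R) →+ R where
  toFun x := u.elim x.fst fun abk => x.snd abk.1 abk.2.1 abk.2.2
  map_zero' := by cases u <;> rfl
  map_add' _ _ := by cases u <;> rfl

@[simp] lemma coord_none (x : Unitization R (Arr d R)) : coord none x = x.fst := rfl

@[simp] lemma coord_some (x : Unitization R (Arr d R)) (a b : Fin (d + 1)) (k : Fin d) :
    coord (some (a, b, k)) x = x.snd a b k := rfl

lemma coord_smul (c : F) (x : Unitization R (Arr d R)) (u : Coord d) :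
    coord u (c • x) = c • coord u x := by
  cases u <;> rfl

@[simp] lemma coord_inl_some (r : R) (abk : Fin (d + 1) × Fin (d + 1) × Fin d) :
    coord (some abk) (Unitization.inl r : Unitization R (Arr d R)) = 0 := rfl

lemma ext_coord {x y : Unitization R (Arr d R)} (h : ∀ u, coord u x = coord u y) : x = y :=
  Unitization.ext (h none) (funext fun a => funext fun b => funext fun k => h (some (a, b, k)))

def coordEquiv : (Fin n → Unitization R (Arr d R)) ≃ (Fin n × Coord d → R) where
  toFun x q := coord q.2 (x q.1)
  invFun v i := ⟨(v (i, none), fun a b k => v (i, some (a, b, k)))⟩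
  left_inv x := funext fun i => ext_coord fun u => by cases u <;> rfl
  right_inv v := funext fun q => by obtain ⟨i, _ | u⟩ := q <;> rfl

@[simp] lemma coordEquiv_apply (x : Fin n → Unitization R (Arr d R)) (q : Fin n × Coord d) :
    coordEquiv x q = coord q.2 (x q.1) := rfl

@[simp] lemma coord_coordEquiv_symm (v : Fin n × Coord d → R) (i : Fin n) (u : Coord d) :
    coord u (coordEquiv.symm v i) = v (i, u) := by
  cases u <;> rfl

def unitMap (φ : R →ₐ[F] R') :
    Unitization R (Arr d R) →ₗ[F] Unitization R' (Arr d R') where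
  toFun x := ⟨(φ x.fst, fun a b k => φ (x.snd a b k))⟩
  map_add' x y := ext_coord fun u => by cases u <;> exact map_add φ _ _
  map_smul' c x := ext_coord fun u => by cases u <;> exact map_smul φ c _

@[simp] lemma fst_unitMap (φ : R →ₐ[F] R') (x : Unitization R (Arr d R)) :
    (unitMap φ x).fst = φ x.fst := rfl

@[simp] lemma snd_unitMap_apply (φ : R →ₐ[F] R') (x : Unitization R (Arr d R))
    (a b : Fin (d + 1)) (k : Fin d) : (unitMap φ x).snd a b k = φ (x.snd a b k) := rfl

@[simp] lemma coord_unitMap (φ : R →ₐ[F] R') (x : Unitization R (Arr d R)) (u : Coord d) :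
    coord u (unitMap φ x) = φ (coord u x) := by
  cases u <;> rfl

lemma unitMap_mul (φ : R →ₐ[F] R') (x y : Unitization R (Arr d R)) :
    unitMap φ (x * y) = unitMap φ x * unitMap φ y := by
  refine ext_coord fun u => ?_
  rcases u with _ | ⟨a, b, k⟩
  · simp
  · simp [Arr.mul_apply, apply_dite φ]

end Coordinates

section GenericPoint

variable {F R R' : Type*} [CommRing F] [CommRing R] [CommRing R'] [Algebra F R] [Algebra F R']
  {n d : ℕ}

def evalU (b : Fin n → Unitization R (Arr d R))
    (f : Unitization F (FreeNonUnitalNonAssocAlgebra F (Fin n))) : Unitization R (Arr d R) :=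
  Unitization.inl (algebraMap F R f.fst) +
    (coeffOf f.snd).sum fun m c => c • evalWith (· * ·) b m

lemma evalU_eq_evalUnit (b : Fin n → Unitization F (Arr d F))
    (f : Unitization F (FreeNonUnitalNonAssocAlgebra F (Fin n))) : evalU b f = evalUnit b f := by
  simp [evalU, evalUnit, evalNA, evalNAWith]

lemma unitMap_evalWith (φ : R →ₐ[F] R') (b : Fin n → Unitization R (Arr d R))
    (m : FreeMagma (Fin n)) :
    unitMap φ (evalWith (· * ·) b m) = evalWith (· * ·) (fun i => unitMap φ (b i)) m := by
  induction m using FreeMagma.recOnMul with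
  | ih1 i => rfl
  | ih2 x y ihx ihy => simp [unitMap_mul, ihx, ihy]

lemma unitMap_evalU (φ : R →ₐ[F] R') (b : Fin n → Unitization R (Arr d R))
    (f : Unitization F (FreeNonUnitalNonAssocAlgebra F (Fin n))) :
    unitMap φ (evalU b f) = evalU (fun i => unitMap φ (b i)) f := by
  have hinl : unitMap φ (Unitization.inl (algebraMap F R f.fst) : Unitization R (Arr d R)) =
      Unitization.inl (algebraMap F R' f.fst) :=
    ext_coord fun u => by cases u <;> simp
  simp [evalU, hinl, map_finsuppSum, unitMap_evalWith]

variable (F n d) in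
def genericTuple (i : Fin n) :
    Unitization (MvPolynomial (Fin n × Coord d) F) (Arr d (MvPolynomial (Fin n × Coord d) F)) :=
  coordEquiv.symm X i

def coordPoly (f : Unitization F (FreeNonUnitalNonAssocAlgebra F (Fin n))) (u : Coord d) :
    MvPolynomial (Fin n × Coord d) F :=
  coord u (evalU (genericTuple F n d) f)

lemma unitMap_aeval_genericTuple (x : Fin n → Unitization R (Arr d R)) (i : Fin n) :
    unitMap (aeval (coordEquiv x)) (genericTuple F n d i) = x i :=
  ext_coord fun u => by simp [genericTuple]

lemma aeval_coordPoly (x : Fin n → Unitization R (Arr d R))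
    (f : Unitization F (FreeNonUnitalNonAssocAlgebra F (Fin n))) (u : Coord d) :
    aeval (coordEquiv x) (coordPoly f u) = coord u (evalU x f) := by
  rw [coordPoly, ← coord_unitMap, unitMap_evalU]
  simp only [unitMap_aeval_genericTuple]

lemma eval_coordPoly (x : Fin n → Unitization F (Arr d F))
    (f : Unitization F (FreeNonUnitalNonAssocAlgebra F (Fin n))) (u : Coord d) :
    eval (coordEquiv x) (coordPoly f u) = coord u (evalUnit x f) := by
  simpa [coe_aeval_eq_eval, evalU_eq_evalUnit] using aeval_coordPoly x f u

lemma evalWith_inr (z : Fin n → Arr d R) (m : FreeMagma (Fin n)) :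
    evalWith (· * ·) (fun i => (z i : Unitization R (Arr d R))) m = evalWith (· * ·) z m := by
  induction m using FreeMagma.recOnMul with
  | ih1 i => rfl
  | ih2 x y ihx ihy => simp [ihx, ihy, Unitization.inr_mul]

lemma coord_some_evalU_inr (z : Fin n → Arr d R)
    (f : Unitization F (FreeNonUnitalNonAssocAlgebra F (Fin n))) (a b : Fin (d + 1)) (k : Fin d) :
    coord (some (a, b, k)) (evalU (fun i => (z i : Unitization R (Arr d R))) f) =
      (coeffOf f.snd).sum fun m c => c • evalWith (· * ·) z m a b k := by
  rw [evalU, map_add, map_finsuppSum]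
  simp [coord_smul, evalWith_inr]

end GenericPoint

section Degree

variable {F : Type*} [CommRing F] {n d : ℕ}

lemma totalDegree_coord_mul_le {σ : Type*}
    {x y : Unitization (MvPolynomial σ F) (Arr d (MvPolynomial σ F))} {p q : ℕ}
    (hx : ∀ u, (coord u x).totalDegree ≤ p) (hy : ∀ u, (coord u y).totalDegree ≤ q)
    (u : Coord d) : (coord u (x * y)).totalDegree ≤ p + q := by
  rcases u with _ | ⟨a, b, k⟩
  · simpa using (totalDegree_mul _ _).trans (add_le_add (hx none) (hy none))
  · simp only [coord_some, Unitization.snd_mul, Arr.add_apply, Arr.smul_apply, smul_eq_mul]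
    refine (totalDegree_add _ _).trans (max_le ((totalDegree_add _ _).trans (max_le ?_ ?_)) ?_)
    · exact (totalDegree_mul _ _).trans (add_le_add (hx none) (hy (some (a, b, k))))
    · exact (totalDegree_mul _ _).trans
        ((add_le_add (hy none) (hx (some (a, b, k)))).trans_eq (add_comm _ _))
    · rw [Arr.mul_apply]
      split_ifs
      · exact (totalDegree_finsetSum _ _).trans <| Finset.sup_le fun l _ =>
          (totalDegree_mul _ _).trans (add_le_add (hx (some (a, l, _))) (hy (some (l, b, _))))
      · simp

lemma totalDegree_coord_evalWith_genericTuple_le (m : FreeMagma (Fin n)) (u : Coord d) :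
    (coord u (evalWith (· * ·) (genericTuple F n d) m)).totalDegree ≤ degM m := by
  induction m using FreeMagma.recOnMul generalizing u with
  | ih1 i =>
    simpa [genericTuple, X] using totalDegree_monomial_le (Finsupp.single (i, u) 1) (1 : F)
  | ih2 x y ihx ihy => exact totalDegree_coord_mul_le ihx ihy u

lemma totalDegree_coordPoly_le (f : Unitization F (FreeNonUnitalNonAssocAlgebra F (Fin n)))
    (hdeg : ∀ m ∈ (coeffOf f.snd).support, degM m ≤ d) (u : Coord d) :
    (coordPoly f u).totalDegree ≤ d := by
  rw [coordPoly, evalU, map_add, map_finsuppSum]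
  refine (totalDegree_add _ _).trans (max_le ?_ ?_)
  · cases u <;> simp [algebraMap_eq]
  · refine (totalDegree_finsetSum _ _).trans (Finset.sup_le fun m hm => ?_)
    simp only [coord_smul]
    exact (totalDegree_smul_le _ _).trans
      ((totalDegree_coord_evalWith_genericTuple_le m u).trans (hdeg m hm))

lemma constantCoeff_coordPoly_none (f : Unitization F (FreeNonUnitalNonAssocAlgebra F (Fin n))) :
    constantCoeff (coordPoly (d := d) f none) = f.fst := by
  have hm (m : FreeMagma (Fin n)) :
      constantCoeff (coord none (evalWith (· * ·) (genericTuple F n d) m)) = 0 := by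
    induction m using FreeMagma.recOnMul with
    | ih1 i => simp only [evalWith_of, genericTuple, coord_coordEquiv_symm, constantCoeff_X]
    | ih2 x y ihx _ =>
      rw [coord_none] at ihx
      simp [Unitization.fst_mul, ihx]
  rw [coordPoly, evalU, map_add, map_finsuppSum, map_add, map_finsuppSum]
  simp only [coord_smul, constantCoeff_smul, hm, smul_zero, Finsupp.sum, Finset.sum_const_zero]
  simp [algebraMap_eq]

end Degree

section Nonvanishing

variable {F : Type*} [CommRing F] {n d : ℕ}

lemma coeff_leafMonomial (a s : ℕ) (m m' : FreeMagma (Fin n)) :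
    coeff (Multiset.toFinsupp (leaves a s m : Multiset _)) (leafMonomial F a s m') =
      if m' = m then 1 else 0 := by
  rw [leafMonomial, prod_map_X_eq_monomial, coeff_monomial]
  congr 1
  rw [Multiset.toFinsupp.injective.eq_iff, Multiset.coe_eq_coe]
  exact propext ⟨eq_of_leaves_perm, fun h => h ▸ List.Perm.refl _⟩

lemma exists_coordPoly_some_ne_zero (f : Unitization F (FreeNonUnitalNonAssocAlgebra F (Fin n)))
    (hdeg : ∀ m ∈ (coeffOf f.snd).support, degM m ≤ d) (hf : f.snd ≠ 0) :
    ∃ abk : Fin (d + 1) × Fin (d + 1) × Fin d, coordPoly f (some abk) ≠ 0 := by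
  obtain ⟨m₀, hm₀⟩ : (coeffOf f.snd).support.Nonempty :=
    Finsupp.support_nonempty_iff.2 fun h => hf (MonoidAlgebra.coeff_eq_zero.1 h)
  have hD := hdeg m₀ hm₀
  have hdepth := depthM_le_degM m₀
  have := one_le_depthM m₀
  refine ⟨(0, ⟨degM m₀, by omega⟩, ⟨0, by omega⟩), fun h0 => ?_⟩
  have h := congrArg (fun p => coeff (Multiset.toFinsupp (leaves 0 0 m₀ : Multiset _))
    (aeval (R := F) (coordEquiv fun i =>
      (shiftArr F n d i : Unitization (MvPolynomial (Fin n × ℕ × ℕ) F) (Arr d _))) p)) h0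
  simp only [aeval_coordPoly, coord_some_evalU_inr, evalWith_shiftArr_apply, map_zero,
    coeff_zero] at h
  rw [Finsupp.sum, coeff_sum, Finset.sum_eq_single_of_mem m₀ hm₀
    fun m _ hm => by simp [apply_ite (coeff _), coeff_leafMonomial, hm]] at h
  simp [coeff_leafMonomial, hdepth.trans hD] at h
  exact Finsupp.mem_support_iff.1 hm₀ h

lemma exists_coordPoly_ne_zero
    {f : Unitization F (FreeNonUnitalNonAssocAlgebra F (Fin n))} (hf : f ≠ 0)
    (hdeg : ∀ m ∈ (coeffOf f.snd).support, degM m ≤ d) :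
    ∃ u : Coord d, coordPoly f u ≠ 0 := by
  by_cases h : f.fst = 0
  · obtain ⟨abk, habk⟩ :=
      exists_coordPoly_some_ne_zero f hdeg fun h' => hf (Unitization.ext h h')
    exact ⟨_, habk⟩
  · exact ⟨none, fun h0 => h (by rw [← constantCoeff_coordPoly_none, h0, map_zero])⟩

end Nonvanishing

open Finset in
lemma card_zeros_le_card_zeros_coordPoly {F : Type*} [CommRing F] [DecidableEq F] {n d : ℕ}
    (f : Unitization F (FreeNonUnitalNonAssocAlgebra F (Fin n))) (u : Coord d) (S : Finset F) :
    Nat.card {b : Fin n → Unitization F (Arr d F) //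
        (∀ i : Fin n, (b i).fst ∈ S) ∧
        (∀ (i : Fin n) (i1 i2 : Fin (d + 1)) (i3 : Fin d), (b i).snd i1 i2 i3 ∈ S) ∧
        evalUnit b f = 0} ≤
      #{v ∈ Fintype.piFinset fun _ : Fin n × Coord d => S | eval v (coordPoly f u) = 0} := by
  refine (Nat.card_le_card_of_injective (fun b => ⟨coordEquiv b.1, ?mem⟩) ?inj).trans
    (Nat.card_eq_finsetCard _).le
  case mem =>
    obtain ⟨b, hfst, hsnd, hzero⟩ := b
    simp only [mem_filter, Fintype.mem_piFinset, eval_coordPoly, hzero, map_zero, and_true]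
    rintro ⟨i, _ | ⟨a, b, k⟩⟩
    exacts [hfst i, hsnd i a b k]
  case inj =>
    exact fun b b' h => Subtype.ext (coordEquiv.injective (congrArg Subtype.val h))

theorem SZ_for_Ad_general {F : Type*} [Field F] (n d : ℕ)
    (S : Finset F) (hS : d < S.card)
    (f : Unitization F (FreeNonUnitalNonAssocAlgebra F (Fin n))) (hf : f ≠ 0)
    (hdeg : ∀ m ∈ (coeffOf f.snd).support, degM m ≤ d) :
    Nat.card {b : Fin n → Unitization F (Arr d F) //
        (∀ i : Fin n, (b i).fst ∈ S) ∧
        (∀ (i : Fin n) (i1 i2 : Fin (d + 1)) (i3 : Fin d), (b i).snd i1 i2 i3 ∈ S) ∧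
        evalUnit b f = 0}
      ≤ d * S.card ^ (n * (d * (d + 1) ^ 2 + 1) - 1) := by
  classical
  obtain ⟨u, hu⟩ := exists_coordPoly_ne_zero hf hdeg
  have hdim : Fintype.card (Fin n × Coord d) = n * (d * (d + 1) ^ 2 + 1) := by
    simp only [Fintype.card_prod, Fintype.card_option, Fintype.card_fin]
    ring
  refine (card_zeros_le_card_zeros_coordPoly f u S).trans (le_mul_pow_sub_one_of_mul_le ?_ hS)
  calc _ ≤ (coordPoly f u).totalDegree * S.card ^ Fintype.card (Fin n × Coord d) :=
        card_zeros_mul_card_le hu S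
    _ ≤ d * S.card ^ (n * (d * (d + 1) ^ 2 + 1)) := by
        rw [hdim]
        gcongr
        exact totalDegree_coordPoly_le f hdeg u

/-- Theorem `NonAssociative-SZ`.  Let `F` be a field, `d, n ≥ 1`, and let
`S ⊆ F` be a finite set with `|S| > d`.  Set `N := d(d+1)² + 1`, the dimension of
`A_d = Unitization F (A'_d(F))` (the `d(d+1)²` entries of the `A'_d` component together with
the scalar coordinate).  Let `f` be a nonzero element of the unitization of `F_{Ā,C̄}[X]`
whose `F_{Ā,C̄}[X]`-component has degree `≤ d`.  Then the number of tuples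
`(b_1, …, b_n) ∈ (A_d)^n` all of whose `nN` coordinates lie in `S` and for which
`f(b_1, …, b_n) = 0` is at most `d · |S|^{nN − 1}`; equivalently, a uniformly random such
tuple is a zero of `f` with probability at most `d / |S|`. -/
theorem SZ_for_Ad {F : Type*} [Field F] (n d : ℕ) (hn : 1 ≤ n) (hd : 1 ≤ d)
    (S : Finset F) (hS : d < S.card)
    (f : Unitization F (FreeNonUnitalNonAssocAlgebra F (Fin n))) (hf : f ≠ 0)
    (hdeg : ∀ m ∈ (coeffOf f.snd).support, degM m ≤ d) :
    Nat.card {b : Fin n → Unitization F (Arr d F) //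
        (∀ i : Fin n, (b i).fst ∈ S) ∧
        (∀ (i : Fin n) (i1 i2 : Fin (d + 1)) (i3 : Fin d), (b i).snd i1 i2 i3 ∈ S) ∧
        evalUnit b f = 0}
      ≤ d * S.card ^ (n * (d * (d + 1) ^ 2 + 1) - 1) :=
  SZ_for_Ad_general n d S hS f hf hdeg

end NAPIT
end
end

section
/- Let R be a commutative ring, let A be a (possibly nonassociative, nonunital) R-algebra with product ·, and define the anticommutator product a ⊙ b := a·b + b·a on A. Then for every n ≥ 1, every element m of the free magma on Fin n, and every assignment b : Fin n → A, the ⊙-evaluation of m at b equals the sum, over all choices ε of a Boolean for each internal node of m, of the ·-evaluation of m_ε at b. In particular, the ⊙-evaluation of a monomial of degree d' is a sum of 2^{d'−1} ·-evaluations (counted with multiplicity). -/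
noncomputable section

open scoped BigOperators

namespace NAPIT

/-!
Expanding `a ⊙ b = a·b + b·a` by distributivity at every internal node of `m` produces exactly
one `·`-product for each choice of orientation of the node, i.e. one term per variant `m_ε`.
-/

lemma one_le_degM {n : ℕ} (m : FreeMagma (Fin n)) : 1 ≤ degM m := by
  induction m with
  | ih1 _ => rfl
  | ih2 x y hx _ => exact le_add_right hx

lemma card_variants {n : ℕ} (m : FreeMagma (Fin n)) :
    Multiset.card (variants m) = 2 ^ (degM m - 1) := by
  induction m with
  | ih1 _ => rfl
  | ih2 x y hx hy =>
    have hdx := one_le_degM x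
    have hdy := one_le_degM y
    simp only [variants, Multiset.card_bind, Multiset.insert_eq_cons, Multiset.card_cons,
      Multiset.card_singleton, Function.comp_def, Multiset.map_const', Multiset.sum_replicate,
      smul_eq_mul, hx, hy]
    rw [show degM (x * y) - 1 = (degM x - 1) + (degM y - 1) + 1 by simp only [degM]; omega]
    ring

section Semiring

variable {A : Type*} [NonUnitalNonAssocSemiring A] {n : ℕ} (b : Fin n → A)

lemma sum_evalWith_variants_mul (x y : FreeMagma (Fin n)) :
    ((variants (x * y)).map (evalWith (· * ·) b)).sum
      = ((variants x).map (evalWith (· * ·) b)).sum * ((variants y).map (evalWith (· * ·) b)).sum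
        + ((variants y).map (evalWith (· * ·) b)).sum
          * ((variants x).map (evalWith (· * ·) b)).sum := by
  simp only [variants, Multiset.map_bind, Multiset.sum_bind, Multiset.insert_eq_cons,
    Multiset.map_cons, Multiset.map_singleton, Multiset.sum_cons, Multiset.sum_singleton,
    evalWith, Multiset.sum_map_add, Multiset.sum_map_mul_left, Multiset.sum_map_mul_right]

theorem evalWith_anticomm_eq_sum_variants (m : FreeMagma (Fin n)) :
    evalWith (fun x y => x * y + y * x) b m = ((variants m).map (evalWith (· * ·) b)).sum := by
  induction m with
  | ih1 _ => simp [evalWith, variants]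
  | ih2 x y hx hy => rw [sum_evalWith_variants_mul, ← hx, ← hy]; rfl

end Semiring

theorem anticommutator_eval_eq_sum_variants_general {A : Type*}
    [NonUnitalNonAssocRing A]
    (n : ℕ) (m : FreeMagma (Fin n)) (b : Fin n → A) :
    evalWith (fun x y => x * y + y * x) b m
        = ((variants m).map (evalWith (fun x y => x * y) b)).sum ∧
    Multiset.card (variants m) = 2 ^ (degM m - 1) :=
  ⟨evalWith_anticomm_eq_sum_variants b m, card_variants m⟩

/-- Let `R` be a commutative ring and `A` a (possibly nonassociative,
nonunital) `R`-algebra with product `·`; let `a ⊙ b := a·b + b·a` be the anticommutator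
product.  For every `n ≥ 1`, every monomial `m` (element of the free magma on `Fin n`) and
every `b : Fin n → A`, the `⊙`-evaluation of `m` at `b` equals the sum, over all choices `ε`
of a Boolean for each internal node of `m`, of the `·`-evaluation of the variant `m_ε` at `b`
(the `m_ε`, counted with multiplicity, form the multiset `variants m`).  In particular the
`⊙`-evaluation of a monomial of degree `d'` is a sum of `2^{d'-1}` `·`-evaluations. -/
theorem anticommutator_eval_eq_sum_variants {R : Type*} [CommRing R] {A : Type*}
    [NonUnitalNonAssocRing A] [Module R A] [SMulCommClass R A A] [IsScalarTower R A A]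
    (n : ℕ) (hn : 1 ≤ n) (m : FreeMagma (Fin n)) (b : Fin n → A) :
    evalWith (fun x y => x * y + y * x) b m
        = ((variants m).map (evalWith (fun x y => x * y) b)).sum ∧
    Multiset.card (variants m) = 2 ^ (degM m - 1) :=
  anticommutator_eval_eq_sum_variants_general n m b

end NAPIT
end
end

section
/- Let F be a field, n ≥ 1, d ≥ 1, let f ∈ F_{Ā,C̄}[X] be a polynomial of degree ≤ d, and let 1 ≤ d' ≤ d. Let Φ(f) ∈ C'_d(R) be the evaluation of f at (Z_1,…,Z_n) under the anticommutator product ⊙. Then the (1, d'+1, 1) entry of Φ(f) equals Σ_m c_m · ψ(m), where the sum runs over all monomials m of degree exactly d', c_m denotes the coefficient of m in f, and ψ(m) := Σ_ε Π_{t=1}^{d'} z_{σ_{m_ε}(t), t, l^{m_ε}_t}, the sum over all choices ε of a Boolean for each internal node of m. -/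
/-! `Z_i` is supported on the superdiagonal `(j, j + 1)`, and `(x ∘ y)[·,·,k]` only reads the
slices `k + 1` of `x` and `y`.  Hence, by induction on a monomial `m`, the `(i, j, k)` entry of
`m(Z)` under `⊙` vanishes unless `j = i + deg m`, in which case it is
`∑_ε ∏_t z_{σ_{m_ε}(t), i + t - 1, k + l^{m_ε}_t - 1}`: a root `x ⊙ y` contributes `x ∘ y + y ∘ x`,
i.e. both orientations of the root, the second factor's column index is shifted by the degree
of the first, and every level is one deeper than in `x` and `y`.  The theorem is the case
`(i, j, k) = (0, d', 0)`, summed linearly over the monomials of `f`. -/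

noncomputable section

open scoped BigOperators

namespace NAPIT

section Entries

def zVar (F : Type*) [CommRing F] {n : ℕ} (d : ℕ) (i : Fin n) (a b : ℕ) :
    MvPolynomial (Fin n × Fin d × Fin d) F :=
  if h : a < d ∧ b < d then MvPolynomial.X (i, ⟨a, h.1⟩, ⟨b, h.2⟩) else 0

/-- `∏_t z_{σ_m(t), k + t - 1, l_t - 1}` (zero-based) with `m` rooted at level `s`.  Unlike
`monProd`, it is parametrised by the root level rather than a level offset, which makes it
multiplicative along `leafData`. -/
def leafProd (F : Type*) [CommRing F] {n : ℕ} (d : ℕ) (k s : ℕ) (m : FreeMagma (Fin n)) :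
    MvPolynomial (Fin n × Fin d × Fin d) F :=
  (((leafData m s).zipIdx k).map fun q => zVar F d q.1.1 q.2 (q.1.2 - 1)).prod

def variantSum (F : Type*) [CommRing F] {n : ℕ} (d : ℕ) (k s : ℕ) (m : FreeMagma (Fin n)) :
    MvPolynomial (Fin n × Fin d × Fin d) F :=
  ((variants m).map (leafProd F d k s)).sum

variable {F : Type*} [CommRing F] {n d : ℕ}

lemma length_leafData (m : FreeMagma (Fin n)) (s : ℕ) : (leafData m s).length = degM m := by
  induction m using FreeMagma.rec generalizing s with
  | of i => rfl
  | mul x y ihx ihy => simp [leafData, degM, ihx, ihy]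

lemma degM_of_mem_variants {m m' : FreeMagma (Fin n)} (h : m' ∈ variants m) :
    degM m' = degM m := by
  induction m using FreeMagma.rec generalizing m' with
  | of i => rw [variants, Multiset.mem_singleton] at h; rw [h]
  | mul x y ihx ihy =>
      simp only [variants, Multiset.mem_bind, Multiset.insert_eq_cons, Multiset.mem_cons,
        Multiset.mem_singleton] at h
      obtain ⟨x', hx', y', hy', rfl | rfl⟩ := h <;>
        simp only [degM, ihx hx', ihy hy', add_comm]

lemma leafProd_of (k s : ℕ) (i : Fin n) :
    leafProd F d k s (FreeMagma.of i) = zVar F d i k (s - 1) := by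
  simp [leafProd, leafData]

lemma leafProd_mul (k s : ℕ) (x y : FreeMagma (Fin n)) :
    leafProd F d k s (FreeMagma.mul x y)
      = leafProd F d k (s + 1) x * leafProd F d (k + degM x) (s + 1) y := by
  simp only [leafProd, leafData, List.zipIdx_append, List.map_append, List.prod_append,
    length_leafData]

lemma leafProd_eq_zero_of_lt (k : ℕ) {s : ℕ} (hs : d < s) (m : FreeMagma (Fin n)) :
    leafProd F d k s m = 0 := by
  induction m using FreeMagma.rec generalizing k s with
  | of i => rw [leafProd_of, zVar, dif_neg (by omega)]
  | mul x y ihx _ => rw [leafProd_mul, ihx k (by omega), zero_mul]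

lemma variantSum_eq_zero_of_lt (k : ℕ) {s : ℕ} (hs : d < s) (m : FreeMagma (Fin n)) :
    variantSum F d k s m = 0 := by
  simp [variantSum, leafProd_eq_zero_of_lt k hs]

lemma variantSum_mul (k s : ℕ) (x y : FreeMagma (Fin n)) :
    variantSum F d k s (FreeMagma.mul x y)
      = variantSum F d k (s + 1) x * variantSum F d (k + degM x) (s + 1) y
        + variantSum F d k (s + 1) y * variantSum F d (k + degM y) (s + 1) x := by
  have hpair : ∀ x' ∈ variants x, ∀ y' ∈ variants y,
      leafProd F d k s (FreeMagma.mul x' y') + leafProd F d k s (FreeMagma.mul y' x')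
        = leafProd F d k (s + 1) x' * leafProd F d (k + degM x) (s + 1) y'
          + leafProd F d k (s + 1) y' * leafProd F d (k + degM y) (s + 1) x' := by
    intro x' hx' y' hy'
    rw [leafProd_mul, leafProd_mul, degM_of_mem_variants hx', degM_of_mem_variants hy']
  simp only [variantSum, variants, Multiset.map_bind, Multiset.sum_bind, Multiset.insert_eq_cons,
    Multiset.map_cons, Multiset.map_singleton, Multiset.sum_cons, Multiset.sum_singleton]
  rw [Multiset.map_congr rfl fun x' hx' => congrArg Multiset.sum
      (Multiset.map_congr rfl fun y' hy' => hpair x' hx' y' hy')]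
  simp only [Multiset.sum_map_add, Multiset.sum_map_mul_left, Multiset.sum_map_mul_right]

lemma monProd_zero_zero : monProd F d 0 0 = leafProd (n := n) F d 0 1 := by
  funext m
  simp [monProd, leafProd, zVar, Function.comp_def]

lemma psi_eq_variantSum (m : FreeMagma (Fin n)) : psi F d m = variantSum F d 0 1 m := by
  rw [psi, variantSum, monProd_zero_zero]

lemma Fin.sum_ite_val_eq_mul {R : Type*} [NonUnitalNonAssocSemiring R] (c : ℕ) (u : R)
    (g : Fin (d + 1) → R) :
    ∑ l : Fin (d + 1), (if (l : ℕ) = c then u else 0) * g l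
      = if h : c ≤ d then u * g ⟨c, Nat.lt_succ_of_le h⟩ else 0 := by
  split_ifs with h
  · rw [Finset.sum_eq_single_of_mem ⟨c, Nat.lt_succ_of_le h⟩ (Finset.mem_univ _)]
    · simp
    · intro l _ hl
      rw [if_neg (fun hc => hl (Fin.ext hc)), zero_mul]
  · refine Finset.sum_eq_zero fun l _ => ?_
    rw [if_neg (by omega), zero_mul]

def CArr.entry {S R : Type*} [Semiring S] [AddCommGroup R] [Module S R]
    (i j : Fin (d + 1)) (k : Fin d) : CArr d R →ₗ[S] R where
  toFun a := a i j k
  map_add' _ _ := rfl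
  map_smul' _ _ := rfl

lemma CArr.mul_apply {R : Type*} [CommRing R] (a b : CArr d R) (i j : Fin (d + 1))
    (k : Fin d) :
    (a * b) i j k = Arr.aprod (CArr.toArr a) (CArr.toArr b) i j k
      + Arr.aprod (CArr.toArr b) (CArr.toArr a) i j k := rfl

lemma evalWith_ZC_apply (m : FreeMagma (Fin n)) (i j : Fin (d + 1)) (k : Fin d) :
    evalWith (· * ·) (ZC F n d) m i j k
      = if (j : ℕ) = i + degM m then variantSum F d i (k + 1) m else 0 := by
  induction m using FreeMagma.rec generalizing i j k with
  | of i₀ =>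
      show Z F n d i₀ i j k = _
      by_cases hj : (j : ℕ) = i + 1 <;>
        simp [Z, hj, degM, variantSum, variants, leafProd_of, zVar]
  | mul x y ihx ihy =>
      show (evalWith (· * ·) (ZC F n d) x * evalWith (· * ·) (ZC F n d) y : CArr d _) i j k = _
      rw [CArr.mul_apply, variantSum_mul]
      simp only [Arr.aprod, CArr.toArr]
      have hdeg : degM (x.mul y) = degM x + degM y := rfl
      by_cases hk : (k : ℕ) + 1 < d
      · simp only [dif_pos hk, ihx, ihy, Fin.sum_ite_val_eq_mul]
        by_cases hj : (j : ℕ) = i + degM (x.mul y)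
        · have := j.isLt
          rw [if_pos hj, dif_pos (by omega), if_pos (by omega), dif_pos (by omega),
            if_pos (by omega)]
        · rw [if_neg hj]
          split_ifs <;> first | omega | simp
      · simp [hk, variantSum_eq_zero_of_lt _ (show d < k + 1 + 1 by omega)]

end Entries

/-- consequence of Claim 3.7.  Let `F` be a field, `n, d ≥ 1`, let `f` be an
element of the free nonunital nonassociative noncommutative algebra `F_{Ā,C̄}[X]` of degree
`≤ d`, and let `1 ≤ d' ≤ d`.  Then the `(1, d'+1, 1)` entry (1-based; zero-based `(0, d', 0)`)
of the evaluation `Φ(f) ∈ C'_d(R)` of `f` at `(Z_1, …, Z_n)` under the anticommutator product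
`⊙` equals `∑_m c_m · ψ(m)`, the sum running over all monomials `m` of degree exactly `d'`,
where `c_m` is the coefficient of `m` in `f` and
`ψ(m) = ∑_ε ∏_{t=1}^{d'} z_{σ_{m_ε}(t), t, l^{m_ε}_t}` (the inner sum over all choices `ε` of
a Boolean for each internal node of `m`). -/
theorem entry_of_anticommutator_eval_free_at_Z {F : Type*} [Field F] (n d : ℕ)
    (hd : 1 ≤ d)
    (f : FreeNonUnitalNonAssocAlgebra F (Fin n))
    (d' : ℕ) (hd'2 : d' ≤ d) :
    evalNA (ZC F n d) f ⟨0, by omega⟩ ⟨d', by omega⟩ ⟨0, by omega⟩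
      = ∑ m ∈ (coeffOf f).support.filter (fun m => degM m = d'),
          MvPolynomial.C (coeffOf f m) * psi F d m := by
  classical
  have hentry (m : FreeMagma (Fin n)) :
      evalWith (· * ·) (ZC F n d) m ⟨0, by omega⟩ ⟨d', by omega⟩ ⟨0, by omega⟩
        = if degM m = d' then psi F d m else 0 := by
    rw [evalWith_ZC_apply, psi_eq_variantSum]
    simp only [zero_add, eq_comm]
  calc evalNA (ZC F n d) f ⟨0, by omega⟩ ⟨d', by omega⟩ ⟨0, by omega⟩
      = CArr.entry (S := F) ⟨0, by omega⟩ ⟨d', by omega⟩ ⟨0, by omega⟩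
          (evalNA (ZC F n d) f) := rfl
    _ = ∑ m ∈ (coeffOf f).support, coeffOf f m • if degM m = d' then psi F d m else 0 := by
      rw [evalNA, evalNAWith, map_finsuppSum, Finsupp.sum]
      refine Finset.sum_congr rfl fun m _ => ?_
      rw [map_smul]
      exact congrArg _ (hentry m)
    _ = _ := by
      rw [Finset.sum_filter]
      refine Finset.sum_congr rfl fun m _ => ?_
      split_ifs
      · rw [MvPolynomial.smul_eq_C_mul]
      · rw [smul_zero]

end NAPIT
end
end

section
/- Let F be a field, n, s ≥ 1, let f be a multivariate polynomial in variables z_1,…,z_n over F, let g₀ ∈ Fin s, and let v be a function assigning to every exponent vector α ∈ (Fin n →₀ ℕ) a vector v_α ∈ F^s such that for every α, the coefficient of the monomial z^α in f equals the g₀-coordinate of v_α. Let w : Fin n → ℕ be a basis isolating weight assignment for v, i.e., suppose there is a finite set M of exponent vectors such that: (1) the family (v_α)_{α ∈ M} is linearly independent and spans the F-subspace of F^s spanned by {v_α : α ∈ (Fin n →₀ ℕ)}; (2) the weight map α ↦ w(α) := Σ_{i} α_i·w(i) is injective on M; and (3) for every α ∉ M, v_α lies in the span of {v_β : β ∈ M,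 w(β) < w(α)}. Then f = 0 if and only if the univariate polynomial in a new variable t obtained from f by substituting z_i ↦ t^{w(i)} for every i is the zero polynomial. -/
/-- Lemma `BIWA-map` / Lemma 4.12 of the paper.  Let `F` be a field,
`n, s ≥ 1`, let `f` be a multivariate polynomial in the variables `z_1, …, z_n` over `F`, let
`g₀ ∈ Fin s` be a distinguished coordinate, and let `v` assign to every exponent vector
`α ∈ (Fin n →₀ ℕ)` a vector `v α ∈ F^s` such that the coefficient of the monomial `z^α` in
`f` equals the `g₀`-coordinate of `v α`.  Suppose `w : Fin n → ℕ` is a *basis isolating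
weight assignment* for `v`, witnessed by a finite set `M` of exponent vectors such that:
(1) the family `(v α)_{α ∈ M}` is linearly independent and spans the `F`-subspace spanned by
    all the `v α`;
(2) the weight `α ↦ ∑ i, α i * w i` is injective on `M`; and
(3) for every `α ∉ M`, `v α` lies in the span of the `v β` with `β ∈ M` of strictly smaller
    weight.
Then `f = 0` if and only if the univariate polynomial obtained from `f` by the substitution
`z_i ↦ t^{w i}` is the zero polynomial. -/
theorem pit_of_basis_isolating_weight {F : Type*} [Field F] (n s : ℕ)
    (hn : 1 ≤ n) (hs : 1 ≤ s)
    (f : MvPolynomial (Fin n) F) (g0 : Fin s)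
    (v : (Fin n →₀ ℕ) → (Fin s → F))
    (hv : ∀ α : Fin n →₀ ℕ, MvPolynomial.coeff α f = v α g0)
    (w : Fin n → ℕ) (M : Finset (Fin n →₀ ℕ))
    (h_indep : LinearIndependent F (fun α : {α : (Fin n →₀ ℕ) // α ∈ M} => v α.1))
    (h_span : Submodule.span F (v '' {α : Fin n →₀ ℕ | α ∈ M})
        = Submodule.span F (Set.range v))
    (h_inj : Set.InjOn (fun α : Fin n →₀ ℕ => ∑ i, α i * w i) ↑M)
    (h_low : ∀ α : Fin n →₀ ℕ, α ∉ M →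
        v α ∈ Submodule.span F
          (v '' {β : Fin n →₀ ℕ | β ∈ M ∧ (∑ i, β i * w i) < (∑ i, α i * w i)})) :
    f = 0 ↔
      MvPolynomial.aeval (fun i : Fin n => (Polynomial.X : Polynomial F) ^ w i) f = 0 := by

  constructor
  · rintro rfl; simp
  · intro hphi
    set W : (Fin n →₀ ℕ) → ℕ := fun α => ∑ i, α i * w i with hWdef
    -- coefficient formula for the substituted polynomial
    have hcoeff : ∀ k : ℕ,
        (∑ α ∈ f.support, (if W α = k then MvPolynomial.coeff α f else 0)) = 0 := by
      intro k
      have h1 : MvPolynomial.aeval (fun i : Fin n => (Polynomial.X : Polynomial F) ^ w i) f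
          = ∑ α ∈ f.support,
              Polynomial.C (MvPolynomial.coeff α f) * Polynomial.X ^ W α := by
        conv_lhs => rw [f.as_sum]
        rw [map_sum]
        refine Finset.sum_congr rfl fun α _ => ?_
        rw [MvPolynomial.aeval_monomial]
        have hprod : (α.prod fun i k => ((Polynomial.X : Polynomial F) ^ w i) ^ k)
            = Polynomial.X ^ W α := by
          rw [Finsupp.prod]
          have : ∀ i ∈ α.support, ((Polynomial.X : Polynomial F) ^ w i) ^ α i
              = Polynomial.X ^ (α i * w i) := by
            intro i _
            rw [← pow_mul, mul_comm]
          rw [Finset.prod_congr rfl this, Finset.prod_pow_eq_pow_sum]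
          congr 1
          rw [hWdef]
          exact Finset.sum_subset (Finset.subset_univ _)
            (fun i _ hi => by simp [Finsupp.notMem_support_iff.mp hi])
        rw [hprod]
        rfl
      have h2 := congrArg (fun p => Polynomial.coeff p k) (h1.symm.trans hphi)
      simpa [Polynomial.finset_sum_coeff, Polynomial.coeff_C_mul,
        Polynomial.coeff_X_pow, mul_ite, eq_comm] using h2
    -- the span argument: if all lighter basis coefficients vanish, so does coeff α f
    have hB : ∀ α : Fin n →₀ ℕ, α ∉ M →
        (∀ β ∈ M, W β < W α → MvPolynomial.coeff β f = 0) →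
        MvPolynomial.coeff α f = 0 := by
      intro α hα h0
      have hsub : v '' {β : Fin n →₀ ℕ | β ∈ M ∧ W β < W α} ⊆
          ↑(LinearMap.ker (LinearMap.proj (R := F) (φ := fun _ : Fin s => F) g0)) := by
        rintro x ⟨β, ⟨hβM, hβw⟩, rfl⟩
        have : MvPolynomial.coeff β f = 0 := h0 β hβM hβw
        simp only [SetLike.mem_coe, LinearMap.mem_ker, LinearMap.proj_apply]
        rw [← hv]; exact this
      have hle := Submodule.span_le.mpr hsub
      have hmem := hle (h_low α hα)
      rw [hv]
      simpa using hmem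
    -- all basis coefficients vanish, by strong induction on the weight
    have hM : ∀ k : ℕ, ∀ β ∈ M, W β = k → MvPolynomial.coeff β f = 0 := by
      intro k
      induction k using Nat.strong_induction_on with
      | _ k IH =>
        intro β hβ hWβ
        have hsum := hcoeff k
        have hsingle : (∑ α ∈ f.support, (if W α = k then MvPolynomial.coeff α f else 0))
            = if W β = k then MvPolynomial.coeff β f else 0 := by
          apply Finset.sum_eq_single
          · intro α hαs hne
            by_cases hαk : W α = k
            · rw [if_pos hαk]
              by_cases hαM : α ∈ M
              · exact absurd (h_inj hαM hβ (hαk.trans hWβ.symm)) hne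
              · exact hB α hαM (fun γ hγ hlt =>
                  IH (W γ) (hαk ▸ hlt) γ hγ rfl)
            · rw [if_neg hαk]
          · intro hβs
            simp [MvPolynomial.notMem_support_iff.mp hβs]
        have := hsingle.symm.trans hsum
        rwa [if_pos hWβ] at this
    rw [MvPolynomial.eq_zero_iff]
    intro α
    by_cases hα : α ∈ M
    · exact hM (W α) α hα rfl
    · exact hB α hα (fun β hβ hlt => hM (W β) β hβ rfl)
end
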